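/- arXiv:2409.06007 — 2 statements merged into one kernel-verified Lean document; each statement's English description precedes it below -/
import Mathlib

section
/- Let M be a real symmetric positive semidefinite N×N matrix, Y ∈ ℝ^N a unit vector, τ ≥ 0, and z ∈ ℂ with η = Im z > 0. Set G(z) = (M − zI)^{-1}, A = 1 + τ(G(z)Y,Y), B = τ(G(z)²Y,Y). Then |A| ≥ |Im A| ≥ η |B|, and consequently the rank-one perturbation of the resolvent trace satisfies |Tr(M − zI)^{-1} − Tr(M − τ Y Y^T − zI)^{-1}| ≤ 1/η. -/
open MeasureTheory Matrix Filter
open scoped Topology ENNReal NNReal BigOperators ComplexConjugate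

noncomputable section

/-- `μ` is the uniform (rotation-invariant) probability distribution on the unit
sphere `S^{n-1} ⊂ ℝ^n`. -/
def IsUniformOnSphere (n : ℕ) (μ : Measure (Fin n → ℝ)) : Prop :=
  IsProbabilityMeasure μ ∧
    μ {x : Fin n → ℝ | ∑ i, x i ^ 2 = 1}ᶜ = 0 ∧
    ∀ O : Matrix (Fin n) (Fin n) ℝ, O * Oᵀ = 1 →
      Measure.map O.mulVec μ = μ

/-- Sample space carrying the `2m` independent sphere vectors. -/
abbrev Samp (n m : ℕ) := Fin m × Fin 2 → Fin n → ℝ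

/-- Joint distribution of the `2m` independent uniform sphere vectors. -/
def samp (n m : ℕ) (μ : Measure (Fin n → ℝ)) : Measure (Samp n m) :=
  Measure.pi fun _ => μ

/-- The tensor product vector `Y_α = y_α^{(1)} ⊗ y_α^{(2)} ∈ ℝ^{n²}`. -/
def tvec {n m : ℕ} (ω : Samp n m) (α : Fin m) : Fin n × Fin n → ℝ :=
  fun p => ω (α, 0) p.1 * ω (α, 1) p.2

/-- The sample covariance matrix `M_n = ∑_α τ_α Y_α Y_α^T`. -/
def covMat {n m : ℕ} (τ : Fin m → ℝ) (ω : Samp n m) :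
    Matrix (Fin n × Fin n) (Fin n × Fin n) ℝ :=
  ∑ α, τ α • vecMulVec (tvec ω α) (tvec ω α)

/-- `M_n^α = M_n − τ_α Y_α Y_α^T`. -/
def covMatα {n m : ℕ} (τ : Fin m → ℝ) (α : Fin m) (ω : Samp n m) :
    Matrix (Fin n × Fin n) (Fin n × Fin n) ℝ :=
  covMat τ ω - τ α • vecMulVec (tvec ω α) (tvec ω α)

/-- The resolvent `(M − zI)⁻¹` of a real matrix, as a complex matrix. -/
def resolv {I : Type*} [Fintype I] [DecidableEq I] (M : Matrix I I ℝ) (z : ℂ) :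
    Matrix I I ℂ :=
  (M.map (fun a => (a : ℂ)) - z • (1 : Matrix I I ℂ))⁻¹

/-- The quadratic form `(HY, Y)` for a real vector `Y`. -/
def qf {I : Type*} [Fintype I] (H : Matrix I I ℂ) (Y : I → ℝ) : ℂ :=
  ∑ i, ∑ j, H i j * (Y j : ℂ) * (Y i : ℂ)

/-- `γ_n(z) = Tr (M_n − zI)⁻¹`. -/
def gam {n m : ℕ} (τ : Fin m → ℝ) (z : ℂ) (ω : Samp n m) : ℂ :=
  (resolv (covMat τ ω) z).trace

/-- `γ_n^α(z) = Tr (M_n^α − zI)⁻¹`. -/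
def gamα {n m : ℕ} (τ : Fin m → ℝ) (α : Fin m) (z : ℂ) (ω : Samp n m) : ℂ :=
  (resolv (covMatα τ α ω) z).trace

/-- `A_α(z) = 1 + τ_α (G^α(z) Y_α, Y_α)`. -/
def Afun {n m : ℕ} (τ : Fin m → ℝ) (α : Fin m) (z : ℂ) (ω : Samp n m) : ℂ :=
  1 + (τ α : ℂ) * qf (resolv (covMatα τ α ω) z) (tvec ω α)

/-- `B_α(z) = τ_α (G^α(z)² Y_α, Y_α)`. -/
def Bfun {n m : ℕ} (τ : Fin m → ℝ) (α : Fin m) (z : ℂ) (ω : Samp n m) : ℂ :=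
  (τ α : ℂ) * qf (resolv (covMatα τ α ω) z * resolv (covMatα τ α ω) z) (tvec ω α)

/-- Expectation of a complex random variable. -/
def expec {Ω : Type*} [MeasurableSpace Ω] (P : Measure Ω) (f : Ω → ℂ) : ℂ :=
  ∫ ω, f ω ∂P

/-- Variance `V ξ = E|ξ − Eξ|²` of a complex random variable. -/
def cvar {Ω : Type*} [MeasurableSpace Ω] (P : Measure Ω) (f : Ω → ℂ) : ℝ :=
  ∫ ω, ‖f ω - expec P f‖ ^ 2 ∂P

/-- `p`-th absolute central moment `E|ξ − Eξ|^p`. -/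
def cmom {Ω : Type*} [MeasurableSpace Ω] (P : Measure Ω) (f : Ω → ℂ) (p : ℕ) : ℝ :=
  ∫ ω, ‖f ω - expec P f‖ ^ p ∂P

/-- Covariance `Cov{ξ, η} = E (ξ − Eξ)(η − Eη)`. -/
def ccov {Ω : Type*} [MeasurableSpace Ω] (P : Measure Ω) (f g : Ω → ℂ) : ℂ :=
  ∫ ω, (f ω - expec P f) * (g ω - expec P g) ∂P

/-- Resampling the `α`-th pair of sphere vectors. -/
def replα {n m : ℕ} (α : Fin m) (ω : Samp n m) (v : Fin 2 → Fin n → ℝ) : Samp n m :=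
  fun i => if i.1 = α then v i.2 else ω i

/-- Conditional expectation `E_α` (expectation with respect to `Y_α` only). -/
def expecα {n m : ℕ} (μ : Measure (Fin n → ℝ)) (α : Fin m)
    (f : Samp n m → ℂ) (ω : Samp n m) : ℂ :=
  ∫ v, f (replα α ω v) ∂(Measure.pi fun _ : Fin 2 => μ)

/-- Conditional variance `V_α ξ = E_α |ξ − E_α ξ|²`. -/
def cvarα {n m : ℕ} (μ : Measure (Fin n → ℝ)) (α : Fin m)
    (f : Samp n m → ℂ) (ω : Samp n m) : ℝ :=
  ∫ v, ‖f (replα α ω v) - expecα μ α f ω‖ ^ 2 ∂(Measure.pi fun _ : Fin 2 => μ)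

/-- Conditional `p`-th absolute central moment `E_α |ξ − E_α ξ|^p`. -/
def cmomα {n m : ℕ} (μ : Measure (Fin n → ℝ)) (α : Fin m)
    (f : Samp n m → ℂ) (p : ℕ) (ω : Samp n m) : ℝ :=
  ∫ v, ‖f (replα α ω v) - expecα μ α f ω‖ ^ p ∂(Measure.pi fun _ : Fin 2 => μ)

/-- Condition A(ii): the normalized counting measure `σ_n` of the `τ_α`'s converges
weakly to the probability measure `σ` on `[0,T]`, with rate `C n⁻² sup|φ|`. -/
def ConditionAii (T : ℝ) (m : ℕ → ℕ) (τ : (n : ℕ) → Fin (m n) → ℝ)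
    (σ : Measure ℝ) (Cσ : ℝ) : Prop :=
  IsProbabilityMeasure σ ∧ σ (Set.Icc (0 : ℝ) T)ᶜ = 0 ∧
    ∀ n : ℕ, 1 ≤ n → ∀ φ : BoundedContinuousFunction ℝ ℝ,
      |(m n : ℝ)⁻¹ * ∑ α, φ (τ n α) - ∫ t, φ t ∂σ| ≤ Cσ / (n : ℝ) ^ 2 * ‖φ‖

/-- `f` is the Stieltjes transform of the limiting spectral distribution: it is analytic
off the real axis, maps each half-plane to itself, and solves the functional equation
`z f(z) = −1 + c − ∫ c dσ(τ)/(1 + τ f(z))`. -/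
def IsStieltjesLimit (c : ℝ) (σ : Measure ℝ) (f : ℂ → ℂ) : Prop :=
  DifferentiableOn ℂ f {z : ℂ | z.im ≠ 0} ∧
    (∀ z : ℂ, z.im ≠ 0 → 0 ≤ (f z).im * z.im) ∧
    ∀ z : ℂ, z.im ≠ 0 →
      z * f z = -1 + (c : ℂ) - ∫ t, (c : ℂ) / (1 + (t : ℂ) * f z) ∂σ

/-! Write `v = G(z) Y`, so that `Y = (M - z) v`. Since `M` is real symmetric,
`(G Y, Y)` is the conjugate of `(v, (M - z) v)`, whose imaginary part is `-η ‖v‖²`; hence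
`Im A = τ η ‖v‖²`. The transpose of `G` is `G`, so `(G² Y, Y) = Σ vᵢ²` has modulus at most `‖v‖²`,
which gives `η |B| ≤ Im A`. The trace identity is the Sherman–Morrison formula for
`M - z = (M - τ Y Yᵀ - z) + τ Y Yᵀ`, and the matrix determinant lemma shows that its denominator,
the `A` of the perturbed matrix, does not vanish. -/

namespace Matrix

variable {ι : Type*} [Fintype ι] [DecidableEq ι]

section Field

variable {K : Type*} [Field K] {A : Matrix ι ι K}

theorem det_add_vecMulVec (hA : IsUnit A.det) (u v : ι → K) :
    (A + vecMulVec u v).det = A.det * (1 + v ⬝ᵥ A⁻¹ *ᵥ u) := by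
  rw [vecMulVec_eq Unit, det_add_replicateCol_mul_replicateRow hA,
    det_unique (1 + replicateRow Unit v * A⁻¹ * replicateCol Unit u), dotProduct_mulVec]
  simp [mul_apply, vecMul, dotProduct, Finset.sum_mul]

theorem inv_add_vecMulVec (hA : IsUnit A.det) (u v : ι → K) (h : 1 + v ⬝ᵥ A⁻¹ *ᵥ u ≠ 0) :
    (A + vecMulVec u v)⁻¹ =
      A⁻¹ - (1 + v ⬝ᵥ A⁻¹ *ᵥ u)⁻¹ • vecMulVec (A⁻¹ *ᵥ u) (v ᵥ* A⁻¹) := by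
  refine inv_eq_right_inv ?_
  rw [add_mul, mul_sub, mul_sub, Matrix.mul_smul, Matrix.mul_smul, mul_vecMulVec, mul_vecMulVec,
    mul_nonsing_inv _ hA, mulVec_mulVec, mul_nonsing_inv _ hA, one_mulVec, vecMulVec_mul,
    vecMulVec_mulVec, op_smul_eq_smul, smul_vecMulVec, smul_smul]
  set s := v ⬝ᵥ A⁻¹ *ᵥ u
  have hs : (1 + s)⁻¹ * (1 + s) = 1 := inv_mul_cancel₀ h
  calc _ = 1 + (1 - (1 + s)⁻¹ * (1 + s)) • vecMulVec u (v ᵥ* A⁻¹) := by module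
    _ = 1 := by rw [hs, sub_self, zero_smul, add_zero]

theorem trace_inv_add_vecMulVec {u v : ι → K} (hA : IsUnit A.det)
    (hAuv : IsUnit (A + vecMulVec u v).det) :
    (A + vecMulVec u v)⁻¹.trace =
      A⁻¹.trace - (v ⬝ᵥ (A⁻¹ * A⁻¹) *ᵥ u) / (1 + v ⬝ᵥ A⁻¹ *ᵥ u) := by
  have h : 1 + v ⬝ᵥ A⁻¹ *ᵥ u ≠ 0 := by
    rintro h0
    rw [det_add_vecMulVec hA, h0, mul_zero] at hAuv
    exact not_isUnit_zero hAuv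
  rw [inv_add_vecMulVec hA u v h, trace_sub, trace_smul, trace_vecMulVec,
    dotProduct_comm (A⁻¹ *ᵥ u), ← dotProduct_mulVec, mulVec_mulVec, smul_eq_mul, div_eq_inv_mul]

end Field

theorem IsHermitian.im_star_dotProduct_sub_smul_one_mulVec {H : Matrix ι ι ℂ}
    (hH : H.IsHermitian) (z : ℂ) (v : ι → ℂ) :
    (star v ⬝ᵥ (H - z • 1) *ᵥ v).im = -z.im * ∑ i, ‖v i‖ ^ 2 := by
  have hvv : star v ⬝ᵥ v = ((∑ i, ‖v i‖ ^ 2 : ℝ) : ℂ) := by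
    simp [dotProduct, Complex.conj_mul']
  have hHv : (star v ⬝ᵥ H *ᵥ v).im = 0 := hH.im_star_dotProduct_mulVec_self v
  rw [sub_mulVec, dotProduct_sub, smul_mulVec, one_mulVec, dotProduct_smul, hvv,
    Complex.sub_im, hHv, smul_eq_mul, Complex.mul_im, Complex.ofReal_im, Complex.ofReal_re]
  ring

theorem IsHermitian.isUnit_det_sub_smul_one {H : Matrix ι ι ℂ} (hH : H.IsHermitian) {z : ℂ}
    (hz : z.im ≠ 0) : IsUnit (H - z • 1).det := by
  rw [isUnit_iff_ne_zero, Ne, ← exists_mulVec_eq_zero_iff]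
  rintro ⟨v, hv0, hv⟩
  have him := hH.im_star_dotProduct_sub_smul_one_mulVec z v
  rw [hv, dotProduct_zero, Complex.zero_im, zero_eq_mul, neg_eq_zero,
    Finset.sum_eq_zero_iff_of_nonneg fun i _ => by positivity] at him
  refine hv0 (funext fun i => ?_)
  simpa using him.resolve_left hz i

end Matrix

section Resolvent

open Matrix

variable {ι : Type*} {M : Matrix ι ι ℝ} {z : ℂ}

theorem Matrix.IsHermitian.map_ofReal (hM : M.IsHermitian) :
    (M.map ((↑) : ℝ → ℂ)).IsHermitian :=
  hM.map _ fun _ => (Complex.conj_ofReal _).symm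

theorem Matrix.IsHermitian.sub_smul_vecMulVec (hM : M.IsHermitian) (t : ℝ) (Y : ι → ℝ) :
    (M - t • vecMulVec Y Y).IsHermitian := by
  refine hM.sub (IsHermitian.smul ?_ (IsSelfAdjoint.all t))
  rw [IsHermitian, conjTranspose_vecMulVec, star_trivial]

variable [Fintype ι]

theorem qf_eq_dotProduct (H : Matrix ι ι ℂ) (Y : ι → ℝ) :
    qf H Y = ((↑) ∘ Y : ι → ℂ) ⬝ᵥ H *ᵥ ((↑) ∘ Y) := by
  simp only [qf, dotProduct, mulVec, Finset.mul_sum, Function.comp_apply]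
  exact Finset.sum_congr rfl fun i _ => Finset.sum_congr rfl fun j _ => by ring

variable [DecidableEq ι]

theorem map_ofReal_sub_smul_one_mul_resolv (hM : M.IsHermitian) (hz : z.im ≠ 0) :
    (M.map ((↑) : ℝ → ℂ) - z • 1) * resolv M z = 1 :=
  mul_nonsing_inv _ (hM.map_ofReal.isUnit_det_sub_smul_one hz)

theorem transpose_resolv (hM : M.IsHermitian) : (resolv M z)ᵀ = resolv M z := by
  have hMt : Mᵀ = M := by rw [← conjTranspose_eq_transpose_of_trivial, hM.eq]
  rw [resolv, transpose_nonsing_inv, transpose_sub, transpose_smul, transpose_one,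
    ← transpose_map, hMt]

theorem im_qf_resolv (hM : M.IsHermitian) (hz : z.im ≠ 0) (Y : ι → ℝ) :
    (qf (resolv M z) Y).im = z.im * ∑ i, ‖(resolv M z *ᵥ ((↑) ∘ Y)) i‖ ^ 2 := by
  set v := resolv M z *ᵥ ((↑) ∘ Y)
  have hY : ((↑) ∘ Y : ι → ℂ) = (M.map (↑) - z • 1) *ᵥ v := by
    rw [mulVec_mulVec, map_ofReal_sub_smul_one_mul_resolv hM hz, one_mulVec]
  have hconj : star (qf (resolv M z) Y) = star v ⬝ᵥ (M.map (↑) - z • 1) *ᵥ v := by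
    have hYreal : star ((↑) ∘ Y : ι → ℂ) = (↑) ∘ Y := funext fun i => Complex.conj_ofReal _
    rw [← hY, qf_eq_dotProduct, ← star_dotProduct_star, hYreal]
  have him := hM.map_ofReal.im_star_dotProduct_sub_smul_one_mulVec z v
  rw [← hconj, Complex.star_def, Complex.conj_im] at him
  linarith

theorem qf_resolv_mul_resolv (hM : M.IsHermitian) (Y : ι → ℝ) :
    qf (resolv M z * resolv M z) Y =
      (resolv M z *ᵥ ((↑) ∘ Y)) ⬝ᵥ (resolv M z *ᵥ ((↑) ∘ Y)) := by
  rw [qf_eq_dotProduct, ← mulVec_mulVec, dotProduct_mulVec, ← mulVec_transpose,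
    transpose_resolv hM]

theorem norm_qf_resolv_mul_resolv_le (hM : M.IsHermitian) (Y : ι → ℝ) :
    ‖qf (resolv M z * resolv M z) Y‖ ≤ ∑ i, ‖(resolv M z *ᵥ ((↑) ∘ Y)) i‖ ^ 2 := by
  rw [qf_resolv_mul_resolv hM]
  refine (norm_sum_le _ _).trans_eq (Finset.sum_congr rfl fun i _ => ?_)
  rw [norm_mul, sq]

theorem im_mul_norm_qf_resolv_mul_resolv_le (hM : M.IsHermitian) (hz : 0 < z.im) {t : ℝ}
    (ht : 0 ≤ t) (Y : ι → ℝ) :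
    z.im * ‖(t : ℂ) * qf (resolv M z * resolv M z) Y‖ ≤
      |(1 + (t : ℂ) * qf (resolv M z) Y).im| := by
  have hB := norm_qf_resolv_mul_resolv_le hM Y (z := z)
  set s := ∑ i, ‖(resolv M z *ᵥ ((↑) ∘ Y)) i‖ ^ 2
  have hA : (1 + (t : ℂ) * qf (resolv M z) Y).im = t * (z.im * s) := by
    rw [Complex.add_im, Complex.one_im, zero_add, Complex.im_ofReal_mul, im_qf_resolv hM hz.ne']
  rw [hA, abs_of_nonneg (by positivity), norm_mul, Complex.norm_real, Real.norm_of_nonneg ht]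
  calc z.im * (t * ‖qf (resolv M z * resolv M z) Y‖) ≤ z.im * (t * s) := by gcongr
    _ = t * (z.im * s) := by ring

theorem trace_resolv_sub_trace_resolv_sub_smul_vecMulVec (hM : M.IsHermitian) (hz : z.im ≠ 0)
    (t : ℝ) (Y : ι → ℝ) :
    (resolv M z).trace - (resolv (M - t • vecMulVec Y Y) z).trace =
      -((t : ℂ) * qf (resolv (M - t • vecMulVec Y Y) z * resolv (M - t • vecMulVec Y Y) z) Y) /
        (1 + (t : ℂ) * qf (resolv (M - t • vecMulVec Y Y) z) Y) := by
  set M' := M - t • vecMulVec Y Y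
  have hM' : M'.IsHermitian := hM.sub_smul_vecMulVec t Y
  have hsplit : M.map ((↑) : ℝ → ℂ) - z • 1 =
      (M'.map (↑) - z • 1) + vecMulVec ((t : ℂ) • ((↑) ∘ Y)) ((↑) ∘ Y) := by
    ext i j
    simp only [M', Matrix.sub_apply, Matrix.add_apply, Matrix.smul_apply, map_apply,
      vecMulVec_apply, Pi.smul_apply, smul_eq_mul, Complex.ofReal_sub, Complex.ofReal_mul,
      Function.comp_apply]
    ring
  have hdet := hM.map_ofReal.isUnit_det_sub_smul_one hz
  rw [hsplit] at hdet
  have hG' : (M'.map ((↑) : ℝ → ℂ) - z • 1)⁻¹ = resolv M' z := rfl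
  rw [resolv, hsplit, trace_inv_add_vecMulVec (hM'.map_ofReal.isUnit_det_sub_smul_one hz) hdet,
    hG', mulVec_smul, mulVec_smul, dotProduct_smul, dotProduct_smul, ← qf_eq_dotProduct,
    ← qf_eq_dotProduct, smul_eq_mul, smul_eq_mul]
  ring

end Resolvent

theorem rank_one_perturbation_bound_general (N : ℕ) (M : Matrix (Fin N) (Fin N) ℝ)
    (hM : M.PosSemidef) (Y : Fin N → ℝ)
    (t : ℝ) (ht : 0 ≤ t) (z : ℂ) (hz : 0 < z.im) :
    |(1 + (t : ℂ) * qf (resolv M z) Y).im| ≤ ‖1 + (t : ℂ) * qf (resolv M z) Y‖ ∧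
    z.im * ‖(t : ℂ) * qf (resolv M z * resolv M z) Y‖ ≤
      |(1 + (t : ℂ) * qf (resolv M z) Y).im| ∧
    ‖(resolv M z).trace - (resolv (M - t • vecMulVec Y Y) z).trace‖ ≤ 1 / z.im := by
  have hM' := hM.isHermitian.sub_smul_vecMulVec t Y
  refine ⟨Complex.abs_im_le_norm _, im_mul_norm_qf_resolv_mul_resolv_le hM.isHermitian hz ht Y, ?_⟩
  have hB := im_mul_norm_qf_resolv_mul_resolv_le hM' hz ht Y
  have hA := Complex.abs_im_le_norm (1 + (t : ℂ) * qf (resolv (M - t • vecMulVec Y Y) z) Y)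
  rw [trace_resolv_sub_trace_resolv_sub_smul_vecMulVec hM.isHermitian hz.ne', norm_div, norm_neg,
    le_div_iff₀ hz, div_mul_eq_mul_div, mul_comm]
  exact div_le_one_of_le₀ (hB.trans hA) (norm_nonneg _)

/-- (2.10)–(2.11): `|A| ≥ |Im A| ≥ η|B|`, and the rank-one perturbation bound
`|Tr(M−zI)⁻¹ − Tr(M−τYYᵀ−zI)⁻¹| ≤ 1/η`. -/
theorem rank_one_perturbation_bound (N : ℕ) (M : Matrix (Fin N) (Fin N) ℝ)
    (hM : M.PosSemidef) (Y : Fin N → ℝ) (hY : ∑ i, Y i ^ 2 = 1)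
    (t : ℝ) (ht : 0 ≤ t) (z : ℂ) (hz : 0 < z.im) :
    |(1 + (t : ℂ) * qf (resolv M z) Y).im| ≤ ‖1 + (t : ℂ) * qf (resolv M z) Y‖ ∧
    z.im * ‖(t : ℂ) * qf (resolv M z * resolv M z) Y‖ ≤
      |(1 + (t : ℂ) * qf (resolv M z) Y).im| ∧
    ‖(resolv M z).trace - (resolv (M - t • vecMulVec Y Y) z).trace‖ ≤ 1 / z.im :=
  rank_one_perturbation_bound_general N M hM Y t ht z hz
end
end

section
/- Let f be the unique solution, in the class of functions analytic on ℂ∖ℝ with Im f(z)·Im z ≥ 0, of z f(z) = −1 + c − ∫ c dσ(τ)/(1 + τ f(z)), where σ is a probability measure on [0,T] and c > 0, and let η0 = 2T(c+1). Then for all z, z1, z2 ∈ C_{η0} with z1 ≠ z2: (i) ( ∫ c τ dσ(τ)/(1 + τ f(z))² − z )^{-1} = f'(z)/f(z); (ii) (z1 − z2)/(f(z1) − f(z2)) = 1/(f(z1) f(z2)) − ∫ c τ² dσ(τ)/((1 + τ f(z1))(1 + τ f(z2))). -/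
open MeasureTheory Matrix Filter
open scoped Topology ENNReal NNReal BigOperators ComplexConjugate

noncomputable section

/-! Because `σ` is a probability measure, the functional equation can be rewritten as
`z = -1/f(z) + ∫ cτ/(1 + τ f(z)) dσ(τ)`, all denominators being nonzero since `Im f > 0`.
Subtracting this at `z₁` and `z₂` gives `z₁ - z₂ = (f(z₁) - f(z₂)) G(z₁, z₂)` with `G` the
right-hand side of (ii), which is (ii). Dividing by `z₁ - z₂` and letting `z₁ → z₂ = z` gives
`f'(z) G(z, z) = 1`, which is (i) after one more use of the rewritten equation. The limit passes
under the integral by dominated convergence: on `C_{η₀}` one has `|f(z)| ≤ 1/Im z`, hence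
`|1 + τ f(z)| ≥ 1/2` for `τ ∈ [0, T]`. -/

lemma one_add_ofReal_mul_ne_zero {w : ℂ} (hw : w.im ≠ 0) (t : ℝ) : 1 + (t : ℂ) * w ≠ 0 := by
  intro h
  have him : t * w.im = 0 := by simpa using congrArg Complex.im h
  rcases mul_eq_zero.mp him with rfl | h'
  · simp at h
  · exact hw h'

lemma im_ofReal_div_one_add_ofReal_mul_nonpos {a t : ℝ} {w : ℂ} (ha : 0 ≤ a) (ht : 0 ≤ t)
    (hw : 0 ≤ w.im) : ((a : ℂ) / (1 + t * w)).im ≤ 0 := by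
  rw [Complex.div_im]
  have : 0 ≤ a * (t * w.im) / Complex.normSq (1 + t * w) := by
    have := Complex.normSq_nonneg (1 + t * w)
    positivity
  simpa using this

lemma Continuous.integrable_of_measure_compl_eq_zero {X E : Type*} [TopologicalSpace X]
    [T2Space X] [MeasurableSpace X] [OpensMeasurableSpace X] [NormedAddCommGroup E]
    {μ : Measure X} [IsFiniteMeasure μ] {K : Set X} (hK : IsCompact K) (hμK : μ Kᶜ = 0)
    {g : X → E} (hg : Continuous g) : Integrable g μ := by
  rw [← Measure.restrict_eq_self_of_ae_mem (mem_ae_iff.mpr hμK)]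
  exact hg.continuousOn.integrableOn_compact hK

lemma integral_sub_integral_eq_mul_integral {α : Type*} [MeasurableSpace α] {μ : Measure α}
    {F G H : α → ℂ} {k : ℂ} (hF : Integrable F μ) (hG : Integrable G μ)
    (h : ∀ t, F t - G t = k * H t) :
    ∫ t, F t ∂μ - ∫ t, G t ∂μ = k * ∫ t, H t ∂μ := by
  rw [← integral_sub hF hG, ← integral_const_mul]
  simp_rw [h]

lemma HasDerivAt.mul_eq_one_of_eventually_sub_eq_mul {𝕜 : Type*} [NontriviallyNormedField 𝕜]
    {f G : 𝕜 → 𝕜} {f' z : 𝕜} (hf : HasDerivAt f f' z) (hG : ContinuousAt G z)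
    (h : ∀ᶠ w in 𝓝[≠] z, w - z = (f w - f z) * G w) : f' * G z = 1 := by
  have hlim : Tendsto (fun w => slope f z w * G w) (𝓝[≠] z) (𝓝 (f' * G z)) :=
    hf.tendsto_slope.mul (hG.tendsto.mono_left nhdsWithin_le_nhds)
  refine tendsto_nhds_unique hlim (tendsto_const_nhds.congr' ?_)
  filter_upwards [h, self_mem_nhdsWithin] with w hw hne
  rw [slope_def_field, div_mul_eq_mul_div, ← hw, div_self (sub_ne_zero.mpr hne)]

section FunctionalEquation

variable {c T : ℝ} {σ : Measure ℝ} {z w : ℂ}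

-- If `w` were real, the imaginary part of the equation would force `w = 0`, i.e. `0 = -1`.
lemma im_pos_of_mul_eq [IsProbabilityMeasure σ] (hz : 0 < z.im) (hw : 0 ≤ w.im * z.im)
    (h : z * w = -1 + c - ∫ t, (c : ℂ) / (1 + t * w) ∂σ) : 0 < w.im := by
  refine (nonneg_of_mul_nonneg_left hw hz).lt_of_ne fun him => ?_
  obtain ⟨a, rfl⟩ : ∃ a : ℝ, w = a := ⟨w.re, Complex.ext rfl (by simp [← him])⟩
  have hreal : (∫ t, (c : ℂ) / (1 + t * a) ∂σ) = ((∫ t, c / (1 + t * a) ∂σ : ℝ) : ℂ) := by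
    rw [← integral_complex_ofReal]
    push_cast
    rfl
  rw [hreal] at h
  have ha : a = 0 := by simpa [hz.ne'] using congrArg Complex.im h
  subst ha
  simp at h

lemma eq_neg_inv_add_integral_of_mul_eq [IsProbabilityMeasure σ] (hσ : σ (Set.Icc 0 T)ᶜ = 0)
    (hw : w.im ≠ 0) (h : z * w = -1 + c - ∫ t, (c : ℂ) / (1 + t * w) ∂σ) :
    z = -1 / w + ∫ t, (c : ℂ) * t / (1 + t * w) ∂σ := by
  have hw0 : w ≠ 0 := fun h0 => hw (by simp [h0])
  have hint :
      (c : ℂ) - ∫ t, (c : ℂ) / (1 + t * w) ∂σ = w * ∫ t, (c : ℂ) * t / (1 + t * w) ∂σ := by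
    have := integral_sub_integral_eq_mul_integral (μ := σ) (F := fun _ => (c : ℂ))
      (G := fun t : ℝ => (c : ℂ) / (1 + t * w)) (k := w)
      (H := fun t : ℝ => (c : ℂ) * t / (1 + t * w)) (integrable_const (c : ℂ))
      (Continuous.integrable_of_measure_compl_eq_zero isCompact_Icc hσ
        (by fun_prop (disch := exact one_add_ofReal_mul_ne_zero hw))) fun t => by
        have := one_add_ofReal_mul_ne_zero hw t
        field_simp
        ring
    simpa using this
  rw [div_add' _ _ _ hw0, eq_div_iff hw0]
  linear_combination h + hint

lemma norm_le_one_div_im_of_eq_neg_inv_add_integral [IsFiniteMeasure σ] (hc : 0 ≤ c)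
    (hσ : σ (Set.Icc 0 T)ᶜ = 0) (hz : 0 < z.im) (hw : 0 < w.im)
    (h : z = -1 / w + ∫ t, (c : ℂ) * t / (1 + t * w) ∂σ) : ‖w‖ ≤ 1 / z.im := by
  have hw0 : 0 < ‖w‖ := norm_pos_iff.mpr fun h0 => hw.ne' (by simp [h0])
  have hintegral : (∫ t, (c : ℂ) * t / (1 + t * w) ∂σ).im ≤ 0 := by
    rw [← Complex.imCLM_apply, ← ContinuousLinearMap.integral_comp_comm _
      (Continuous.integrable_of_measure_compl_eq_zero isCompact_Icc hσ <| by
        fun_prop (disch := exact one_add_ofReal_mul_ne_zero hw.ne'))]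
    refine integral_nonpos_of_ae ?_
    filter_upwards [mem_ae_iff.mpr hσ] with t ht
    simpa using im_ofReal_div_one_add_ofReal_mul_nonpos (mul_nonneg hc ht.1) ht.1 hw.le
  have hinv : (-1 / w).im = w.im / ‖w‖ ^ 2 := by
    rw [neg_div, Complex.neg_im, one_div, Complex.inv_im, neg_div, neg_neg,
      Complex.normSq_eq_norm_sq]
  have hzw : z.im * ‖w‖ ≤ 1 :=
    calc z.im * ‖w‖ ≤ w.im / ‖w‖ ^ 2 * ‖w‖ := by
          gcongr
          rw [← hinv]
          have him := congrArg Complex.im h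
          rw [Complex.add_im] at him
          linarith
      _ = w.im / ‖w‖ := by field_simp
      _ ≤ 1 := (div_le_one hw0).mpr (Complex.im_le_norm w)
  rwa [le_div_iff₀ hz, mul_comm]

lemma sub_eq_mul_of_eq_neg_inv_add_integral [IsFiniteMeasure σ] (hσ : σ (Set.Icc 0 T)ᶜ = 0)
    {z₁ z₂ w₁ w₂ : ℂ} (hw₁ : w₁.im ≠ 0) (hw₂ : w₂.im ≠ 0)
    (h₁ : z₁ = -1 / w₁ + ∫ t, (c : ℂ) * t / (1 + t * w₁) ∂σ)
    (h₂ : z₂ = -1 / w₂ + ∫ t, (c : ℂ) * t / (1 + t * w₂) ∂σ) :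
    z₁ - z₂ = (w₁ - w₂) *
      (1 / (w₁ * w₂) - ∫ t, (c : ℂ) * t ^ 2 / ((1 + t * w₁) * (1 + t * w₂)) ∂σ) := by
  have hw₁0 : w₁ ≠ 0 := fun h0 => hw₁ (by simp [h0])
  have hw₂0 : w₂ ≠ 0 := fun h0 => hw₂ (by simp [h0])
  have hint := integral_sub_integral_eq_mul_integral (μ := σ)
    (F := fun t : ℝ => (c : ℂ) * t / (1 + t * w₁))
    (G := fun t : ℝ => (c : ℂ) * t / (1 + t * w₂))
    (k := w₂ - w₁) (H := fun t : ℝ => (c : ℂ) * t ^ 2 / ((1 + t * w₁) * (1 + t * w₂)))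
    (Continuous.integrable_of_measure_compl_eq_zero isCompact_Icc hσ
      (by fun_prop (disch := exact one_add_ofReal_mul_ne_zero hw₁)))
    (Continuous.integrable_of_measure_compl_eq_zero isCompact_Icc hσ
      (by fun_prop (disch := exact one_add_ofReal_mul_ne_zero hw₂))) fun t => by
        have := one_add_ofReal_mul_ne_zero hw₁ t
        have := one_add_ofReal_mul_ne_zero hw₂ t
        field_simp
        ring
  have hinv : -1 / w₁ + 1 / w₂ = (w₁ - w₂) * (1 / (w₁ * w₂)) := by
    field_simp
    ring
  rw [h₁, h₂]
  linear_combination hint + hinv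

lemma integral_div_sq_sub_eq_mul [IsFiniteMeasure σ] (hσ : σ (Set.Icc 0 T)ᶜ = 0)
    (hw : w.im ≠ 0) (h : z = -1 / w + ∫ t, (c : ℂ) * t / (1 + t * w) ∂σ) :
    (∫ t, (c : ℂ) * t / (1 + t * w) ^ 2 ∂σ) - z =
      w * (1 / (w * w) - ∫ t, (c : ℂ) * t ^ 2 / ((1 + t * w) * (1 + t * w)) ∂σ) := by
  have hw0 : w ≠ 0 := fun h0 => hw (by simp [h0])
  have hint := integral_sub_integral_eq_mul_integral (μ := σ)
    (F := fun t : ℝ => (c : ℂ) * t / (1 + t * w) ^ 2)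
    (G := fun t : ℝ => (c : ℂ) * t / (1 + t * w))
    (k := -w) (H := fun t : ℝ => (c : ℂ) * t ^ 2 / ((1 + t * w) * (1 + t * w)))
    (Continuous.integrable_of_measure_compl_eq_zero isCompact_Icc hσ
      (by fun_prop (disch := exact (pow_ne_zero 2 <| one_add_ofReal_mul_ne_zero hw ·))))
    (Continuous.integrable_of_measure_compl_eq_zero isCompact_Icc hσ
      (by fun_prop (disch := exact one_add_ofReal_mul_ne_zero hw))) fun t => by
        have := one_add_ofReal_mul_ne_zero hw t
        field_simp
        ring
  rw [h]
  linear_combination hint + (by field_simp : 1 / w = w * (1 / (w * w)))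

end FunctionalEquation

namespace IsStieltjesLimit

variable {c T : ℝ} {σ : Measure ℝ} {f : ℂ → ℂ}

lemma im_pos [IsProbabilityMeasure σ] (hf : IsStieltjesLimit c σ f) {z : ℂ} (hz : 0 < z.im) :
    0 < (f z).im :=
  im_pos_of_mul_eq hz (hf.2.1 z hz.ne') (hf.2.2 z hz.ne')

lemma eq_neg_inv_add_integral [IsProbabilityMeasure σ] (hσ : σ (Set.Icc 0 T)ᶜ = 0)
    (hf : IsStieltjesLimit c σ f) {z : ℂ} (hz : 0 < z.im) :
    z = -1 / f z + ∫ t, (c : ℂ) * t / (1 + t * f z) ∂σ :=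
  eq_neg_inv_add_integral_of_mul_eq hσ (hf.im_pos hz).ne' (hf.2.2 z hz.ne')

lemma sub_eq_mul [IsProbabilityMeasure σ] (hσ : σ (Set.Icc 0 T)ᶜ = 0)
    (hf : IsStieltjesLimit c σ f) {z₁ z₂ : ℂ} (hz₁ : 0 < z₁.im) (hz₂ : 0 < z₂.im) :
    z₁ - z₂ = (f z₁ - f z₂) *
      (1 / (f z₁ * f z₂) - ∫ t, (c : ℂ) * t ^ 2 / ((1 + t * f z₁) * (1 + t * f z₂)) ∂σ) :=
  sub_eq_mul_of_eq_neg_inv_add_integral hσ (hf.im_pos hz₁).ne' (hf.im_pos hz₂).ne'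
    (hf.eq_neg_inv_add_integral hσ hz₁) (hf.eq_neg_inv_add_integral hσ hz₂)

lemma half_le_norm_one_add_mul [IsProbabilityMeasure σ] (hc : 0 ≤ c)
    (hσ : σ (Set.Icc 0 T)ᶜ = 0) (hf : IsStieltjesLimit c σ f) {z : ℂ}
    (hz : 2 * T * (c + 1) < z.im) {t : ℝ} (ht : t ∈ Set.Icc 0 T) :
    1 / 2 ≤ ‖1 + t * f z‖ := by
  have hT : 0 ≤ T := ht.1.trans ht.2
  have hz0 : 0 < z.im := by nlinarith
  have hfz : ‖f z‖ ≤ 1 / z.im := norm_le_one_div_im_of_eq_neg_inv_add_integral hc hσ hz0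
    (hf.im_pos hz0) (hf.eq_neg_inv_add_integral hσ hz0)
  have htf : ‖(t : ℂ) * f z‖ ≤ 1 / 2 :=
    calc ‖(t : ℂ) * f z‖ = t * ‖f z‖ := by simp [abs_of_nonneg ht.1]
      _ ≤ T * (1 / z.im) := by gcongr; exact ht.2
      _ ≤ 1 / 2 := by
        rw [mul_one_div, div_le_div_iff₀ hz0 two_pos]
        nlinarith
  have := norm_sub_norm_le (1 : ℂ) (-(t * f z))
  simp only [norm_one, norm_neg, sub_neg_eq_add] at this
  linarith

lemma continuousAt_integral [IsProbabilityMeasure σ] (hc : 0 ≤ c) (hT : 0 ≤ T)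
    (hσ : σ (Set.Icc 0 T)ᶜ = 0) (hf : IsStieltjesLimit c σ f) {z : ℂ}
    (hz : 2 * T * (c + 1) < z.im) :
    ContinuousAt (fun w => ∫ t, (c : ℂ) * t ^ 2 / ((1 + t * f w) * (1 + t * f z)) ∂σ) z := by
  have hz0 : 0 < z.im := by nlinarith
  have hfz : ContinuousAt f z := (hf.1.differentiableAt
    ((isOpen_ne_fun Complex.continuous_im continuous_const).mem_nhds hz0.ne')).continuousAt
  refine continuousAt_of_dominated (bound := fun _ => 4 * c * T ^ 2)
    (Eventually.of_forall fun w => (by fun_prop : Measurable _).aestronglyMeasurable) ?_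
    (integrable_const _) ?_
  · filter_upwards [(isOpen_lt continuous_const Complex.continuous_im).mem_nhds hz] with w hw
    filter_upwards [mem_ae_iff.mpr hσ] with t ht
    have hw' := hf.half_le_norm_one_add_mul hc hσ hw ht
    have hz' := hf.half_le_norm_one_add_mul hc hσ hz ht
    rw [norm_div, norm_mul, norm_mul, norm_pow, Complex.norm_real, Complex.norm_real,
      Real.norm_of_nonneg hc, Real.norm_eq_abs, sq_abs, div_le_iff₀ (by positivity)]
    have hprod : 1 ≤ (2 * ‖1 + t * f w‖) * (2 * ‖1 + t * f z‖) := by nlinarith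
    calc c * t ^ 2 ≤ c * T ^ 2 := by gcongr; exacts [ht.1, ht.2]
      _ ≤ c * T ^ 2 * ((2 * ‖1 + t * f w‖) * (2 * ‖1 + t * f z‖)) :=
          le_mul_of_one_le_right (by positivity) hprod
      _ = _ := by ring
  · filter_upwards [mem_ae_iff.mpr hσ] with t ht
    have hne : 1 + (t : ℂ) * f z ≠ 0 :=
      norm_pos_iff.mp ((one_half_pos).trans_le (hf.half_le_norm_one_add_mul hc hσ hz ht))
    exact continuousAt_const.div (by fun_prop) (mul_ne_zero hne hne)

lemma deriv_mul_eq_one [IsProbabilityMeasure σ] (hc : 0 ≤ c) (hT : 0 ≤ T)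
    (hσ : σ (Set.Icc 0 T)ᶜ = 0) (hf : IsStieltjesLimit c σ f) {z : ℂ}
    (hz : 2 * T * (c + 1) < z.im) :
    deriv f z * (1 / (f z * f z) -
      ∫ t, (c : ℂ) * t ^ 2 / ((1 + t * f z) * (1 + t * f z)) ∂σ) = 1 := by
  have hz0 : 0 < z.im := by nlinarith
  have hfz : DifferentiableAt ℂ f z := hf.1.differentiableAt
    ((isOpen_ne_fun Complex.continuous_im continuous_const).mem_nhds hz0.ne')
  have hfz0 : f z ≠ 0 := fun h0 => (hf.im_pos hz0).ne' (by simp [h0])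
  refine hfz.hasDerivAt.mul_eq_one_of_eventually_sub_eq_mul
    (G := fun w => 1 / (f w * f z) -
      ∫ t, (c : ℂ) * t ^ 2 / ((1 + t * f w) * (1 + t * f z)) ∂σ) ?_ ?_
  · exact (continuousAt_const.div (hfz.continuousAt.mul continuousAt_const)
      (mul_ne_zero hfz0 hfz0)).sub (hf.continuousAt_integral hc hT hσ hz)
  · filter_upwards [nhdsWithin_le_nhds
      ((isOpen_lt continuous_const Complex.continuous_im).mem_nhds hz0)] with w hw
    exact hf.sub_eq_mul hσ hw hz0

end IsStieltjesLimit

/-- (3.5): identities for the limiting Stieltjes transform `f`: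
`(∫ cτ dσ(τ)/(1+τf(z))² − z)⁻¹ = f'(z)/f(z)` and
`Δz/Δf = 1/(f(z₁)f(z₂)) − ∫ cτ² dσ(τ)/((1+τf(z₁))(1+τf(z₂)))`. -/
theorem stieltjes_transform_identities (c T : ℝ) (hc : 0 < c) (hT : 0 < T)
    (σ : Measure ℝ) (hσp : IsProbabilityMeasure σ) (hσs : σ (Set.Icc (0 : ℝ) T)ᶜ = 0)
    (f : ℂ → ℂ) (hf : IsStieltjesLimit c σ f) :
    ∀ z z1 z2 : ℂ, 2 * T * (c + 1) < z.im → 2 * T * (c + 1) < z1.im →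
      2 * T * (c + 1) < z2.im → z1 ≠ z2 →
        ((∫ t, (c : ℂ) * (t : ℂ) / (1 + (t : ℂ) * f z) ^ 2 ∂σ) - z)⁻¹ =
          deriv f z / f z ∧
        (z1 - z2) / (f z1 - f z2) =
          1 / (f z1 * f z2) - ∫ t, (c : ℂ) * (t : ℂ) ^ 2 /
            ((1 + (t : ℂ) * f z1) * (1 + (t : ℂ) * f z2)) ∂σ := by
  intro z z1 z2 hz hz1 hz2 hne
  have hη : 0 ≤ 2 * T * (c + 1) := by positivity
  have hz0 : 0 < z.im := hη.trans_lt hz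
  constructor
  · have hderiv := eq_inv_of_mul_eq_one_left (hf.deriv_mul_eq_one hc.le hT.le hσs hz)
    rw [integral_div_sq_sub_eq_mul hσs (hf.im_pos hz0).ne'
      (hf.eq_neg_inv_add_integral hσs hz0), mul_inv, hderiv]
    exact (div_eq_inv_mul _ _).symm
  · have hsub := hf.sub_eq_mul hσs (hη.trans_lt hz1) (hη.trans_lt hz2)
    have hfne : f z1 - f z2 ≠ 0 := fun h0 => hne (sub_eq_zero.mp (by rw [hsub, h0, zero_mul]))
    rw [hsub, mul_div_cancel_left₀ _ hfne]
end
end
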